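/- arXiv:2209.12182 — 2 statements merged into one kernel-verified Lean document; each statement's English description precedes it below -/
import Mathlib

section
/- Let G be a connected unicyclic graph on n vertices (so G has exactly n edges), and let a_1,…,a_n be an enumeration of the edge-binomials of G that forms a d-sequence in S. Then the edge of G corresponding to a_n lies on the unique cycle of G; equivalently, the graph obtained from G by deleting the edge corresponding to a_n is a tree. -/
open MvPolynomial

/-- The edge-binomial `f_{ij} = x_i * y_j - x_j * y_i` in
`S = k[x_1,…,x_n,y_1,…,y_n]`, realized as `MvPolynomial (Fin n ⊕ Fin n) k`
with `x_i = X (Sum.inl i)` and `y_i = X (Sum.inr i)`. -/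
noncomputable def edgeBinomial (k : Type) [Field k] {n : ℕ} (i j : Fin n) :
    MvPolynomial (Fin n ⊕ Fin n) k :=
  X (Sum.inl i) * X (Sum.inr j) - X (Sum.inl j) * X (Sum.inr i)

/-- The parity edge-binomial `g_{ij} = x_i * x_j - y_i * y_j`. -/
noncomputable def parityBinomial (k : Type) [Field k] {n : ℕ} (i j : Fin n) :
    MvPolynomial (Fin n ⊕ Fin n) k :=
  X (Sum.inl i) * X (Sum.inl j) - X (Sum.inr i) * X (Sum.inr j)

/-- `a 0, …, a (m-1)` is a d-sequence: it is a minimal system of generators of the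
ideal it generates, and `((a_0,…,a_{i-1}) : a_i * a_j) = ((a_0,…,a_{i-1}) : a_j)`
for all `i ≤ j`. -/
def IsDSequence {R : Type*} [CommRing R] {m : ℕ} (a : Fin m → R) : Prop :=
  (∀ i : Fin m, a i ∉ Ideal.span (a '' {j | j ≠ i})) ∧
  ∀ i j : Fin m, i ≤ j →
    Submodule.colon (Ideal.span (a '' {l | l < i})) (Ideal.span {a i * a j}) =
      Submodule.colon (Ideal.span (a '' {l | l < i})) (Ideal.span {a j})

/-- `α, β : Fin N → Fin n` is an enumeration (with a choice of orientation) of the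
edges of the graph `G`. -/
def IsEdgeEnumeration {n N : ℕ} (G : SimpleGraph (Fin n)) (α β : Fin N → Fin n) : Prop :=
  (∀ t, G.Adj (α t) (β t)) ∧
  (∀ e ∈ G.edgeSet, ∃ t, e = s(α t, β t)) ∧
  Function.Injective (fun t => (s(α t, β t) : Sym2 (Fin n)))

/-- The edge-binomials of `G` form a d-sequence (for some enumeration of the edges). -/
def EdgeBinomialsFormDSequence (k : Type) [Field k] {n : ℕ} (G : SimpleGraph (Fin n)) : Prop :=
  ∃ (N : ℕ) (α β : Fin N → Fin n), IsEdgeEnumeration G α β ∧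
    IsDSequence (fun t => edgeBinomial k (α t) (β t))

/-- The parity edge-binomials of `G` form a d-sequence. -/
def ParityBinomialsFormDSequence (k : Type) [Field k] {n : ℕ} (G : SimpleGraph (Fin n)) : Prop :=
  ∃ (N : ℕ) (α β : Fin N → Fin n), IsEdgeEnumeration G α β ∧
    IsDSequence (fun t => parityBinomial k (α t) (β t))

/-- A graph is unicyclic if it contains exactly one cycle, i.e. there is a unique
set of edges which is the edge set of some cycle. -/
def IsUnicyclic {V : Type*} (G : SimpleGraph V) : Prop :=
  ∃! s : Set (Sym2 V), ∃ (v : V) (w : G.Walk v v), w.IsCycle ∧ s = {e | e ∈ w.edges}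

/-- The degree of a vertex (number of neighbours). -/
noncomputable def degr {V : Type*} (G : SimpleGraph V) (v : V) : ℕ := (G.neighborSet v).ncard

/-- `H` belongs to the class `T_m` with center `k0`: `H` is a tree, the center has
degree `m`, and every other vertex has degree at most `2`. -/
def IsTmTree {n : ℕ} (H : SimpleGraph (Fin n)) (m : ℕ) (k0 : Fin n) : Prop :=
  H.IsTree ∧ degr H k0 = m ∧ ∀ v : Fin n, v ≠ k0 → degr H v ≤ 2

/-- The graph obtained from `G` by adding the edge `{u, v}`. -/
def addEdge {V : Type*} (G : SimpleGraph V) (u v : V) : SimpleGraph V :=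
  G ⊔ SimpleGraph.fromEdgeSet {s(u, v)}

section Aux

open SimpleGraph

lemma edgeBinomial_self (k : Type) [Field k] {n : ℕ} (a : Fin n) :
    edgeBinomial k a a = 0 := by
  simp [edgeBinomial]

lemma edgeBinomial_swap (k : Type) [Field k] {n : ℕ} (a b : Fin n) :
    edgeBinomial k b a = - edgeBinomial k a b := by
  simp only [edgeBinomial]; ring

/-- The path lemma: for a walk `W : a → b`, there is a monomial `u` in the `x`-variables
with `u * f_{ab}` in the ideal generated by the edge binomials of the edges of `W`. -/
lemma path_lemma (k : Type) [Field k] {n : ℕ} {H : SimpleGraph (Fin n)} :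
    ∀ {a b : Fin n} (W : H.Walk a b),
      ∃ u : MvPolynomial (Fin n ⊕ Fin n) k,
        u ∈ Submonoid.closure
            (Set.range fun i : Fin n => (X (Sum.inl i) : MvPolynomial (Fin n ⊕ Fin n) k)) ∧
        u * edgeBinomial k a b ∈
          Ideal.span {f | ∃ i j : Fin n, s(i, j) ∈ W.edges ∧ f = edgeBinomial k i j} := by
  intro a b W
  induction W with
  | nil => exact ⟨1, one_mem _, by simp [edgeBinomial_self]⟩
  | @cons a c b h W' ih =>
    obtain ⟨u', hu', hmem⟩ := ih
    refine ⟨X (Sum.inl c) * u', mul_mem (Submonoid.subset_closure ⟨c, rfl⟩) hu', ?_⟩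
    have key : (X (Sum.inl c) * u') * edgeBinomial k a b
        = (u' * X (Sum.inl b)) * edgeBinomial k a c
          + X (Sum.inl a) * (u' * edgeBinomial k c b) := by
      simp only [edgeBinomial]; ring
    rw [key]
    apply add_mem
    · exact Ideal.mul_mem_left _ _ (Ideal.subset_span
        ⟨a, c, by simp [SimpleGraph.Walk.edges_cons], rfl⟩)
    · refine Ideal.mul_mem_left _ _ (Ideal.span_mono ?_ hmem)
      rintro f ⟨i, j, hij, rfl⟩
      exact ⟨i, j, by simp [SimpleGraph.Walk.edges_cons, hij], rfl⟩

end Aux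

/-- Let `G` be a connected unicyclic graph on `n` vertices (so `G`
has exactly `n` edges), and let `a_1, …, a_n` be an enumeration of the edge-binomials
of `G` forming a d-sequence in `S`. Then the edge corresponding to the last
edge-binomial lies on the unique cycle of `G`: deleting it yields a tree. -/
theorem deleteEdge_last_isTree_of_dSequence (k : Type) [Field k] {n : ℕ}
    (G : SimpleGraph (Fin n)) (hconn : G.Connected) (huni : IsUnicyclic G)
    (α β : Fin n → Fin n) (henum : IsEdgeEnumeration G α β)
    (hd : IsDSequence fun t => edgeBinomial k (α t) (β t)) :
    ∀ t : Fin n, (∀ s : Fin n, s ≤ t) →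
      (G.deleteEdges {s(α t, β t)}).IsTree := by
  classical
  intro t ht
  set H := G.deleteEdges {s(α t, β t)} with hH
  have hadj : G.Adj (α t) (β t) := henum.1 t
  -- adjacency in H for any edge of G other than the deleted one
  have hHadj : ∀ l : Fin n, l ≠ t → H.Adj (α l) (β l) := by
    intro l hl
    rw [hH, SimpleGraph.deleteEdges_adj]
    refine ⟨henum.1 l, ?_⟩
    simp only [Set.mem_singleton_iff]
    intro hcontra
    exact hl (henum.2.2 hcontra)
  -- every edge of a walk in H is an edge of G
  have hHG : ∀ e' ∈ H.edgeSet, e' ∈ G.edgeSet := by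
    intro e' he'
    rw [hH, SimpleGraph.edgeSet_deleteEdges] at he'
    exact he'.1
  have heH : s(α t, β t) ∉ H.edgeSet := by
    rw [hH, SimpleGraph.edgeSet_deleteEdges]
    exact fun hc => hc.2 rfl
  by_cases hreach : H.Reachable (α t) (β t)
  · -- the endpoints remain reachable: H is connected, and acyclicity follows
    -- from uniqueness of the cycle of G.
    have hGcycE : ∃ (u0 : Fin n) (p0 : G.Walk u0 u0), p0.IsCycle ∧ s(α t, β t) ∈ p0.edges := by
      exact SimpleGraph.adj_and_reachable_delete_edges_iff_exists_cycle.mp ⟨hadj, hreach⟩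
    obtain ⟨u0, p0, hp0, hep0⟩ := hGcycE
    constructor
    · -- connectedness
      have step : ∀ {u v : Fin n}, G.Walk u v → H.Reachable u v := by
        intro u v W
        induction W with
        | nil => exact SimpleGraph.Reachable.refl _
        | @cons u c v h W' ih =>
          refine SimpleGraph.Reachable.trans ?_ ih
          by_cases he : s(u, c) = s(α t, β t)
          · rw [Sym2.eq_iff] at he
            rcases he with ⟨h1, h2⟩ | ⟨h1, h2⟩
            · subst h1; subst h2; exact hreach
            · subst h1; subst h2; exact hreach.symm
          · refine SimpleGraph.Adj.reachable ?_
            rw [hH, SimpleGraph.deleteEdges_adj]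
            exact ⟨h, by simpa using he⟩
      haveI : Nonempty (Fin n) := ⟨t⟩
      refine ⟨fun u v => ?_⟩
      obtain ⟨W⟩ := hconn.preconnected u v
      exact step W
    · -- acyclicity
      intro v0 c hc
      have hsub : ∀ e' ∈ c.edges, e' ∈ G.edgeSet := fun e' he' =>
        hHG e' (c.edges_subset_edgeSet he')
      have hcyc : (c.transfer G hsub).IsCycle := hc.transfer hsub
      obtain ⟨S, _, hSuniq⟩ := huni
      have h1 : {e' | e' ∈ (c.transfer G hsub).edges} = S :=
        hSuniq _ ⟨v0, c.transfer G hsub, hcyc, rfl⟩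
      have h2 : {e' | e' ∈ p0.edges} = S := hSuniq _ ⟨u0, p0, hp0, rfl⟩
      have hin : s(α t, β t) ∈ S := h2 ▸ hep0
      rw [← h1] at hin
      simp only [Set.mem_setOf_eq, SimpleGraph.Walk.edges_transfer] at hin
      exact heH (c.edges_subset_edgeSet hin)
  · -- the endpoints are disconnected in H: derive a contradiction from the d-sequence.
    exfalso
    -- the unique cycle of G avoids the deleted edge, hence lives in H
    obtain ⟨S, ⟨v, w, hw, rfl⟩, _⟩ := huni
    have hew : s(α t, β t) ∉ w.edges := by
      intro hew
      exact hreach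
        (SimpleGraph.adj_and_reachable_delete_edges_iff_exists_cycle.mpr ⟨v, w, hw, hew⟩).2
    -- positions of the cycle edges
    have hwG : ∀ e' ∈ w.edges, e' ∈ G.edgeSet := fun e' he' => w.edges_subset_edgeSet he'
    set P : Finset (Fin n) := Finset.univ.filter (fun s => s(α s, β s) ∈ w.edges) with hP
    have hPne : P.Nonempty := by
      have hlen : 0 < w.edges.length := by
        rw [SimpleGraph.Walk.length_edges]
        have h3 := hw.three_le_length
        omega
      obtain ⟨e0, he0⟩ := List.exists_mem_of_length_pos hlen
      obtain ⟨q0, hq0⟩ := henum.2.1 e0 (hwG e0 he0)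
      exact ⟨q0, by simp [hP, ← hq0, he0]⟩
    set p := P.max' hPne with hp
    have hpw : s(α p, β p) ∈ w.edges := by
      have hmem : p ∈ P := P.max'_mem hPne
      simp only [hP, Finset.mem_filter] at hmem
      exact hmem.2
    have hple : p ≤ t := ht p
    -- transfer the cycle to the graph on its own edge set and remove the top edge
    set C : SimpleGraph (Fin n) := SimpleGraph.fromEdgeSet {e' | e' ∈ w.edges} with hC
    have hsubC : ∀ e' ∈ w.edges, e' ∈ C.edgeSet := by
      intro e' he'
      rw [hC, SimpleGraph.edgeSet_fromEdgeSet]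
      exact ⟨he', G.not_isDiag_of_mem_edgeSet (hwG e' he')⟩
    have hCreach : (C \ SimpleGraph.fromEdgeSet {s(α p, β p)}).Reachable (α p) (β p) := by
      refine (SimpleGraph.adj_and_reachable_delete_edges_iff_exists_cycle.mpr
        ⟨v, w.transfer C hsubC, hw.transfer hsubC, ?_⟩).2
      rw [SimpleGraph.Walk.edges_transfer]
      exact hpw
    obtain ⟨W⟩ := hCreach
    -- the path lemma applied to W
    obtain ⟨u, huc, humem⟩ := path_lemma k W
    -- the ideal generated by the binomials before position p
    set I : Ideal (MvPolynomial (Fin n ⊕ Fin n) k) :=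
      Ideal.span ((fun l => edgeBinomial k (α l) (β l)) '' {l | l < p}) with hI
    have hspanle :
        Ideal.span {f | ∃ i j : Fin n, s(i, j) ∈ W.edges ∧ f = edgeBinomial k i j} ≤ I := by
      rw [Ideal.span_le]
      rintro f ⟨i, j, hijW, rfl⟩
      have hijE := W.edges_subset_edgeSet hijW
      rw [SimpleGraph.mem_edgeSet, SimpleGraph.sdiff_adj] at hijE
      obtain ⟨hCij, hFij⟩ := hijE
      rw [hC, SimpleGraph.fromEdgeSet_adj] at hCij
      obtain ⟨hijw, hijne⟩ := hCij
      have hne : s(i, j) ≠ s(α p, β p) := by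
        intro hc
        exact hFij (by rw [SimpleGraph.fromEdgeSet_adj]; exact ⟨by simp [hc], hijne⟩)
      obtain ⟨q, hq⟩ := henum.2.1 s(i, j) (hwG _ hijw)
      have hqP : q ∈ P := by
        rw [hP]
        simp only [Finset.mem_filter, Finset.mem_univ, true_and]
        rw [← hq]; exact hijw
      have hqlt : q < p := by
        refine lt_of_le_of_ne (P.le_max' q hqP) ?_
        intro hc
        exact hne (by rw [hq, hc])
      rw [Sym2.eq_iff] at hq
      rcases hq with ⟨h1, h2⟩ | ⟨h1, h2⟩
      · exact Ideal.subset_span ⟨q, hqlt, by rw [h1, h2]⟩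
      · have : edgeBinomial k i j = - edgeBinomial k (α q) (β q) := by
          rw [h1, h2]; exact edgeBinomial_swap k (α q) (β q)
        rw [this]
        exact neg_mem (Ideal.subset_span ⟨q, hqlt, rfl⟩)
    have humemI : u * edgeBinomial k (α p) (β p) ∈ I := hspanle humem
    -- u lies in the colon ideal (I : a_p a_t)
    have hL : u ∈ Submodule.colon I
        (Ideal.span {edgeBinomial k (α p) (β p) * edgeBinomial k (α t) (β t)}) := by
      rw [Ideal.mem_colon_span_singleton, ← mul_assoc]
      exact Ideal.mul_mem_right _ _ humemI
    have hR : u * edgeBinomial k (α t) (β t) ∈ I := by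
      have := hd.2 p t hple
      rw [← Ideal.mem_colon_span_singleton]
      rw [← this]
      exact hL
    -- evaluation killing I but not u * a_t
    set g : Fin n ⊕ Fin n → k :=
      Sum.elim (fun _ => 1) (fun i => if H.Reachable (α t) i then 0 else 1) with hg
    have hIker : I ≤ RingHom.ker (eval g) := by
      rw [hI, Ideal.span_le]
      rintro f ⟨l, hl, rfl⟩
      have hlt : l ≠ t := by
        intro hc
        rw [hc] at hl
        exact absurd (hl.trans_le hple) (lt_irrefl t)
      have hadjH : H.Adj (α l) (β l) := hHadj l hlt
      have hiff : H.Reachable (α t) (α l) ↔ H.Reachable (α t) (β l) :=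
        ⟨fun h => h.trans hadjH.reachable, fun h => h.trans hadjH.symm.reachable⟩
      have hvv : (if H.Reachable (α t) (α l) then (0:k) else 1)
          = (if H.Reachable (α t) (β l) then (0:k) else 1) := if_congr hiff rfl rfl
      rw [SetLike.mem_coe, RingHom.mem_ker]
      simp only [edgeBinomial, map_sub, map_mul, eval_X, hg, Sum.elim_inl, Sum.elim_inr]
      rw [hvv]
      ring
    have hu1 : eval g u = 1 := by
      have hle : Submonoid.closure
          (Set.range fun i : Fin n => (X (Sum.inl i) : MvPolynomial (Fin n ⊕ Fin n) k))
          ≤ Submonoid.comap (eval g : MvPolynomial (Fin n ⊕ Fin n) k →* k) ⊥ := by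
        rw [Submonoid.closure_le]
        rintro x ⟨i, rfl⟩
        simp [Submonoid.mem_comap, Submonoid.mem_bot, hg]
      have := hle huc
      rw [Submonoid.mem_comap, Submonoid.mem_bot] at this
      exact this
    have hat1 : eval g (edgeBinomial k (α t) (β t)) = 1 := by
      simp only [edgeBinomial, map_sub, map_mul, eval_X, hg, Sum.elim_inl, Sum.elim_inr]
      rw [if_pos (SimpleGraph.Reachable.refl (α t)), if_neg hreach]
      ring
    have h0 : eval g (u * edgeBinomial k (α t) (β t)) = 0 := hIker hR
    rw [map_mul, hu1, hat1, mul_one] at h0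
    exact one_ne_zero h0
end

section
/- Let G be a bipartite simple graph on vertex set {1,…,n} and let e_1,…,e_N be an enumeration of the edges of G. Then the sequence of edge-binomials f_{e_1},…,f_{e_N} is a d-sequence in S if and only if the corresponding sequence of parity edge-binomials g_{e_1},…,g_{e_N} is a d-sequence in S. -/
open MvPolynomial

/-- A graph is bipartite: its vertex set admits a bipartition such that every edge
joins the two parts. -/
def IsBipartiteGraph {V : Type*} (G : SimpleGraph V) : Prop :=
  ∃ A : Set V, ∀ u v : V, G.Adj u v → ((u ∈ A ∧ v ∉ A) ∨ (v ∈ A ∧ u ∉ A))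

/-! Let `A` be one side of a bipartition of `G`. Exchanging `x_v` and `y_v` for every vertex
`v ∉ A` is a ring automorphism of `S`, and since every edge has exactly one end in `A` it sends
each edge-binomial `f_{uv}` to `± g_{uv}`. Being a d-sequence is invariant under ring isomorphisms
and under replacing each term by an associate. -/

section DSequence

variable {R S : Type*} [CommRing R] [CommRing S] {m : ℕ}

theorem isDSequence_iff_forall_mem (a : Fin m → R) :
    IsDSequence a ↔ (∀ i, a i ∉ Ideal.span (a '' {j | j ≠ i})) ∧
      ∀ i j, i ≤ j → ∀ r, r * (a i * a j) ∈ Ideal.span (a '' {l | l < i}) ↔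
        r * a j ∈ Ideal.span (a '' {l | l < i}) := by
  simp only [IsDSequence, SetLike.ext_iff, Ideal.mem_colon_span_singleton]

theorem Ideal.span_image_eq_of_associated {ι : Type*} {a b : ι → R}
    (h : ∀ t, Associated (a t) (b t)) (s : Set ι) :
    Ideal.span (a '' s) = Ideal.span (b '' s) := by
  apply le_antisymm <;> rw [Ideal.span_le] <;> rintro _ ⟨t, ht, rfl⟩
  · exact (Ideal.mem_iff_of_associated (h t).symm).mp (Ideal.subset_span ⟨t, ht, rfl⟩)
  · exact (Ideal.mem_iff_of_associated (h t)).mp (Ideal.subset_span ⟨t, ht, rfl⟩)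

theorem isDSequence_congr_of_associated {a b : Fin m → R} (h : ∀ t, Associated (a t) (b t)) :
    IsDSequence a ↔ IsDSequence b := by
  simp only [isDSequence_iff_forall_mem, Ideal.span_image_eq_of_associated h,
    Ideal.mem_iff_of_associated (h _),
    Ideal.mem_iff_of_associated (((h _).mul_mul (h _)).mul_left _),
    Ideal.mem_iff_of_associated ((h _).mul_left _)]

theorem isDSequence_map_ringEquiv_iff (e : R ≃+* S) (a : Fin m → R) :
    IsDSequence (fun t => e (a t)) ↔ IsDSequence a := by
  have hspan (s : Set (Fin m)) :
      Ideal.span ((fun t => e (a t)) '' s) = (Ideal.span (a '' s)).map e := by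
    rw [Ideal.map_span, Set.image_image]
  simp only [isDSequence_iff_forall_mem, hspan, e.surjective.forall, ← map_mul,
    Ideal.apply_mem_of_equiv_iff]

end DSequence

section SwapOutside

variable {V : Type*} (A : Set V) [DecidablePred (· ∈ A)]

def swapOutside : V ⊕ V ≃ V ⊕ V :=
  Function.Involutive.toPerm
    (Sum.elim (fun i => if i ∈ A then .inl i else .inr i)
      (fun i => if i ∈ A then .inr i else .inl i))
    (by rintro (i | i) <;> by_cases h : i ∈ A <;> simp [h])

@[simp]
theorem swapOutside_inl (i : V) : swapOutside A (.inl i) = if i ∈ A then .inl i else .inr i :=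
  rfl

@[simp]
theorem swapOutside_inr (i : V) : swapOutside A (.inr i) = if i ∈ A then .inr i else .inl i :=
  rfl

end SwapOutside

section Bipartite

variable (k : Type) [Field k] {n : ℕ} (A : Set (Fin n)) [DecidablePred (· ∈ A)] {u v : Fin n}

theorem rename_swapOutside_edgeBinomial_of_mem (hu : u ∈ A) (hv : v ∉ A) :
    rename (swapOutside A) (edgeBinomial k u v) = parityBinomial k u v := by
  simp [edgeBinomial, parityBinomial, hu, hv, mul_comm]

theorem rename_swapOutside_edgeBinomial_of_notMem (hu : u ∉ A) (hv : v ∈ A) :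
    rename (swapOutside A) (edgeBinomial k u v) = -parityBinomial k u v := by
  simp [edgeBinomial, parityBinomial, hu, hv, mul_comm]

theorem associated_rename_swapOutside_edgeBinomial (h : (u ∈ A ∧ v ∉ A) ∨ (v ∈ A ∧ u ∉ A)) :
    Associated (rename (swapOutside A) (edgeBinomial k u v)) (parityBinomial k u v) := by
  rcases h with ⟨hu, hv⟩ | ⟨hv, hu⟩
  · rw [rename_swapOutside_edgeBinomial_of_mem k A hu hv]
  · rw [rename_swapOutside_edgeBinomial_of_notMem k A hu hv]
    exact Associated.rfl.neg_left

end Bipartite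

/-- Let `G` be a bipartite graph on `{1,…,n}` and let
`e_1, …, e_N` be an enumeration of the edges of `G`.  Then the sequence of
edge-binomials `f_{e_1}, …, f_{e_N}` is a d-sequence in `S` if and only if the
corresponding sequence of parity edge-binomials `g_{e_1}, …, g_{e_N}` is a
d-sequence in `S`. -/
theorem edgeBinomials_dSequence_iff_parityBinomials_of_bipartite (k : Type) [Field k]
    {n N : ℕ} (G : SimpleGraph (Fin n)) (hbip : IsBipartiteGraph G)
    (α β : Fin N → Fin n) (henum : IsEdgeEnumeration G α β) :
    IsDSequence (fun t => edgeBinomial k (α t) (β t)) ↔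
      IsDSequence (fun t => parityBinomial k (α t) (β t)) := by
  classical
  obtain ⟨A, hA⟩ := hbip
  rw [← isDSequence_map_ringEquiv_iff (renameEquiv k (swapOutside A)).toRingEquiv]
  exact isDSequence_congr_of_associated fun t =>
    associated_rename_swapOutside_edgeBinomial k A (hA _ _ (henum.1 t))
end
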